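/- On a 3 × 3 board, for every single consistent clue there exist at least two distinct Numbrix solutions consistent with it; i.e., no single clue defines a 3 × 3 Numbrix puzzle. -/

import Mathlib

/-! Every cell of the `3 × 3` board is fixed by one of its four reflections, and reflecting a
solution across an axis through the clue cell gives a second solution with the same clue. It
differs from the first because a Numbrix solution is injective and the reflection moves some
cell. -/

/-- Two cells of an `m × n` board are adjacent if they agree in one coordinate
and differ by exactly 1 in the other. -/
def Adj {m n : ℕ} (a b : Fin m × Fin n) : Prop :=
  (a.1 = b.1 ∧ (a.2.val + 1 = b.2.val ∨ b.2.val + 1 = a.2.val)) ∨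
  (a.2 = b.2 ∧ (a.1.val + 1 = b.1.val ∨ b.1.val + 1 = a.1.val))

/-- A Numbrix solution on an `m × n` board: a bijection onto `{1, …, m*n}`
(equivalently, an injective map with values in `[1, m*n]`) such that cells
carrying consecutive values are adjacent. -/
def IsNumbrix {m n : ℕ} (f : Fin m × Fin n → ℕ) : Prop :=
  (∀ c, 1 ≤ f c ∧ f c ≤ m * n) ∧ Function.Injective f ∧
    ∀ c c', f c' = f c + 1 → Adj c c'

open Function

section Reflections

variable {m n : ℕ}

theorem Adj.swap {a b : Fin n × Fin n} (h : Adj a b) : Adj a.swap b.swap :=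
  h.symm

theorem Adj.map_rev_id {a b : Fin m × Fin n} (h : Adj a b) :
    Adj (Prod.map Fin.rev id a) (Prod.map Fin.rev id b) := by
  unfold Adj at *
  simp only [Prod.map_fst, Prod.map_snd, id, Fin.ext_iff, Fin.val_rev] at *
  omega

theorem Adj.map_id_rev {a b : Fin m × Fin n} (h : Adj a b) :
    Adj (Prod.map id Fin.rev a) (Prod.map id Fin.rev b) := by
  unfold Adj at *
  simp only [Prod.map_fst, Prod.map_snd, id, Fin.ext_iff, Fin.val_rev] at *
  omega

def antiTranspose (p : Fin n × Fin n) : Fin n × Fin n := (p.2.rev, p.1.rev)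

theorem antiTranspose_involutive : Involutive (antiTranspose : Fin n × Fin n → _) := fun p => by
  simp only [antiTranspose, Fin.rev_rev]

theorem Adj.antiTranspose {a b : Fin n × Fin n} (h : Adj a b) :
    Adj (antiTranspose a) (antiTranspose b) :=
  h.swap.map_rev_id.map_id_rev

end Reflections

theorem IsNumbrix.comp_involutive {m n : ℕ} {f : Fin m × Fin n → ℕ} (hf : IsNumbrix f)
    {σ : Fin m × Fin n → Fin m × Fin n} (hσ : Involutive σ)
    (hadj : ∀ a b, Adj a b → Adj (σ a) (σ b)) : IsNumbrix (f ∘ σ) := by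
  obtain ⟨hrange, hinj, hstep⟩ := hf
  refine ⟨fun c => hrange (σ c), hinj.comp hσ.injective, fun c c' h => ?_⟩
  simpa only [hσ _] using hadj _ _ (hstep (σ c) (σ c') h)

theorem IsNumbrix.exists_ne_of_involutive {m n : ℕ} {f : Fin m × Fin n → ℕ} (hf : IsNumbrix f)
    {σ : Fin m × Fin n → Fin m × Fin n} (hσ : Involutive σ)
    (hadj : ∀ a b, Adj a b → Adj (σ a) (σ b)) (hσ_ne : σ ≠ id) {c : Fin m × Fin n}
    (hc : σ c = c) : ∃ g, IsNumbrix g ∧ g c = f c ∧ g ≠ f :=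
  ⟨f ∘ σ, hf.comp_involutive hσ hadj, congrArg f hc, fun h => hσ_ne (hf.2.1.comp_left h)⟩

theorem exists_reflection_fixing (c : Fin 3 × Fin 3) :
    ∃ σ : Fin 3 × Fin 3 → Fin 3 × Fin 3, Involutive σ ∧ (∀ a b, Adj a b → Adj (σ a) (σ b)) ∧
      σ ≠ id ∧ σ c = c := by
  have hcases : c.swap = c ∨ antiTranspose c = c ∨
      Prod.map Fin.rev id c = c ∨ Prod.map id Fin.rev c = c := by
    revert c; decide
  rcases hcases with h | h | h | h
  · exact ⟨Prod.swap, Prod.swap_swap, fun _ _ => Adj.swap, by decide, h⟩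
  · exact ⟨antiTranspose, antiTranspose_involutive, fun _ _ => Adj.antiTranspose, by decide, h⟩
  · exact ⟨Prod.map Fin.rev id, Involutive.prodMap Fin.rev_involutive fun _ => rfl,
      fun _ _ => Adj.map_rev_id, by decide, h⟩
  · exact ⟨Prod.map id Fin.rev, Involutive.prodMap (fun _ => rfl) Fin.rev_involutive,
      fun _ _ => Adj.map_id_rev, by decide, h⟩

theorem three_by_three_one_clue (c : Fin 3 × Fin 3) (v : ℕ)
    (hclue : ∃ f : Fin 3 × Fin 3 → ℕ, IsNumbrix f ∧ f c = v) :
    ∃ f g : Fin 3 × Fin 3 → ℕ,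
      IsNumbrix f ∧ IsNumbrix g ∧ f c = v ∧ g c = v ∧ f ≠ g := by
  obtain ⟨f, hf, rfl⟩ := hclue
  obtain ⟨σ, hσ, hadj, hσ_ne, hc⟩ := exists_reflection_fixing c
  obtain ⟨g, hg, hgc, hgf⟩ := hf.exists_ne_of_involutive hσ hadj hσ_ne hc
  exact ⟨f, g, hf, hg, rfl, hgc, hgf.symm⟩
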